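/- arXiv:1908.09903 — 7 statements merged into one kernel-verified Lean document; each statement's English description precedes it below -/
import Mathlib

section
/- (Singleton bound) Let F be a field and C a linear code of length n over F (a submodule of Fin n → F) with dim C = k ≥ 1. If every nonzero codeword of C has Hamming weight at least d, then d ≤ n − k + 1. -/
/-! Restricting `C` to `k - 1` coordinates is a linear map into a space of dimension `k - 1 < k`,
so it has a nonzero codeword in its kernel; that codeword vanishes on `k - 1` coordinates and hence
has weight at most `n - k + 1`. -/

open Finset Module

theorem hammingNorm_le_card_sub_of_eqOn_zero {ι : Type*} [Fintype ι] {β : ι → Type*}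
    [∀ i, Zero (β i)] [∀ i, DecidableEq (β i)] {x : ∀ i, β i} (s : Finset ι)
    (hx : ∀ i ∈ s, x i = 0) : hammingNorm x ≤ Fintype.card ι - #s := by
  classical
  rw [← card_compl]
  exact card_le_card fun i hi => mem_compl.2 fun his => (mem_filter.1 hi).2 (hx i his)

namespace Submodule

variable {ι F : Type*} [Fintype ι] [Field F]

theorem exists_ne_zero_eqOn_zero_of_card_lt (C : Submodule F (ι → F)) (s : Finset ι)
    (hs : #s < finrank F C) : ∃ c ∈ C, c ≠ 0 ∧ ∀ i ∈ s, c i = 0 := by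
  have hker : LinearMap.ker (LinearMap.funLeft F F ((↑) : s → ι) ∘ₗ C.subtype) ≠ ⊥ :=
    LinearMap.ker_ne_bot_of_finrank_lt (by simpa using hs)
  obtain ⟨c, hc, hc0⟩ := exists_mem_ne_zero_of_ne_bot hker
  refine ⟨c, c.2, by simpa using hc0, fun i hi => ?_⟩
  simpa using congrFun (LinearMap.mem_ker.1 hc) ⟨i, hi⟩

theorem add_finrank_le_card_add_one_of_le_hammingNorm [DecidableEq F]
    (C : Submodule F (ι → F)) (hC : C ≠ ⊥) {d : ℕ} (hd : ∀ c ∈ C, c ≠ 0 → d ≤ hammingNorm c) :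
    d + finrank F C ≤ Fintype.card ι + 1 := by
  have hk : 1 ≤ finrank F C := one_le_finrank_iff.2 hC
  have hkn : finrank F C ≤ Fintype.card ι := by simpa using C.finrank_le
  obtain ⟨s, -, hs⟩ := exists_subset_card_eq (s := (univ : Finset ι)) (n := finrank F C - 1)
    (by rw [card_univ]; omega)
  obtain ⟨c, hcC, hc0, hcs⟩ := C.exists_ne_zero_eqOn_zero_of_card_lt s (by omega)
  have hdc := hd c hcC hc0
  have hwt := hammingNorm_le_card_sub_of_eqOn_zero s hcs
  omega

end Submodule

/-- Singleton bound: a linear code of length `n` and dimension `k ≥ 1` in which every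
nonzero codeword has Hamming weight at least `d` satisfies `d ≤ n - k + 1`. -/
theorem stmt_6 {n d k : ℕ} {F : Type*} [Field F] [DecidableEq F]
    (C : Submodule F (Fin n → F))
    (hk : Module.finrank F C = k) (hk1 : 1 ≤ k)
    (hd : ∀ c ∈ C, c ≠ 0 → d ≤ hammingNorm c) :
    d ≤ n - k + 1 := by
  have hbound := C.add_finrank_le_card_add_one_of_le_hammingNorm
    (Submodule.one_le_finrank_iff.mp (hk ▸ hk1)) hd
  rw [Fintype.card_fin, hk] at hbound
  omega
end

section
/- (Binary MDS codes are trivial) Let C be a linear code of length n over GF(2) (a submodule of Fin n → ZMod 2) with dim C = k, where 2 ≤ k, and suppose C is MDS, i.e., every nonzero codeword of C has Hamming weight at least n − k + 1. Then k = n or k = n − 1. -/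
/-!
If `n ≥ k + 2`, the codewords vanishing on a fixed set `T` of `k - 2` coordinates form a space of
dimension at least `2`, so they contain nonzero `a`, `b`, `a + b`, all supported on the
`n - k + 2` coordinates outside `T`. Each of them has weight at least `n - k + 1`, so each misses
at most one coordinate outside `T`. Over `GF(2)` the support of `a + b` consists of coordinates
missed by `a` or by `b`, hence `n - k + 1 ≤ 2`.
-/

open Finset Module

theorem hammingNorm_eq_sum_of_eq_zero_of_notMem {ι β : Type*} [Fintype ι] [Zero β]
    [DecidableEq β] (S : Finset ι) {x : ι → β} (hx : ∀ i ∉ S, x i = 0) :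
    hammingNorm x = ∑ i ∈ S, if x i ≠ 0 then 1 else 0 := by
  rw [hammingNorm, card_filter]
  exact (sum_subset (subset_univ S) fun i _ hi => by simp [hx i hi]).symm

theorem ZMod.hammingNorm_add_add_hammingNorm_add_hammingNorm_le {ι : Type*} [Fintype ι]
    (S : Finset ι) {u v : ι → ZMod 2} (hu : ∀ i ∉ S, u i = 0) (hv : ∀ i ∉ S, v i = 0) :
    hammingNorm (u + v) + hammingNorm u + hammingNorm v ≤ 2 * #S := by
  have huv : ∀ i ∉ S, (u + v) i = 0 := fun i hi => by simp [hu i hi, hv i hi]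
  rw [hammingNorm_eq_sum_of_eq_zero_of_notMem S huv, hammingNorm_eq_sum_of_eq_zero_of_notMem S hu,
    hammingNorm_eq_sum_of_eq_zero_of_notMem S hv, ← sum_add_distrib, ← sum_add_distrib,
    mul_comm, ← smul_eq_mul, ← sum_const]
  have pointwise : ∀ a b : ZMod 2,
      ((if a + b ≠ 0 then 1 else 0) + (if a ≠ 0 then 1 else 0) + if b ≠ 0 then 1 else 0) ≤ 2 := by
    decide
  exact sum_le_sum fun i _ => pointwise (u i) (v i)

theorem Submodule.exists_linearIndependent_pair_eq_zero_on {F ι : Type*} [Field F] [Fintype ι]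
    (C : Submodule F (ι → F)) (T : Finset ι) (h : #T + 2 ≤ finrank F C) :
    ∃ a ∈ C, ∃ b ∈ C, (∀ i ∈ T, a i = 0 ∧ b i = 0) ∧ LinearIndependent F ![a, b] := by
  let restrict : C →ₗ[F] (T → F) := LinearMap.funLeft F F ((↑) : T → ι) ∘ₗ C.subtype
  have hker : 1 < finrank F (LinearMap.ker restrict) := by
    have := restrict.finrank_range_add_finrank_ker
    have := (LinearMap.range restrict).finrank_le
    simp only [finrank_fintype_fun_eq_card, Fintype.card_coe] at this
    omega
  obtain ⟨x, hx⟩ := (finrank_pos_iff_exists_ne_zero (R := F)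
    (M := LinearMap.ker restrict)).mp (by omega)
  obtain ⟨y, hxy⟩ := exists_linearIndependent_pair_of_one_lt_finrank hker hx
  let incl := C.subtype ∘ₗ (LinearMap.ker restrict).subtype
  have hincl : LinearMap.ker incl = ⊥ := by simp [incl, LinearMap.ker_comp]
  refine ⟨x.1.1, x.1.2, y.1.1, y.1.2, fun i hi =>
    ⟨congrFun x.2 ⟨i, hi⟩, congrFun y.2 ⟨i, hi⟩⟩, ?_⟩
  have hcomp : incl ∘ ![x, y] = ![x.1.1, y.1.1] := by
    ext i : 1
    fin_cases i <;> rfl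
  exact hcomp ▸ hxy.map' incl hincl

/-- Binary MDS codes are trivial: a binary linear `[n,k]` code with `k ≥ 2` in which every
nonzero codeword has Hamming weight at least `n - k + 1` satisfies `k = n` or `k = n - 1`. -/
theorem stmt_10 {n k : ℕ}
    (C : Submodule (ZMod 2) (Fin n → ZMod 2))
    (hk : Module.finrank (ZMod 2) C = k) (hk2 : 2 ≤ k)
    (hmds : ∀ c ∈ C, c ≠ 0 → n - k + 1 ≤ hammingNorm c) :
    k = n ∨ k = n - 1 := by
  have hkn : k ≤ n := by simpa [hk] using C.finrank_le
  suffices n ≤ k + 1 by omega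
  obtain ⟨T, -, hT⟩ := exists_subset_card_eq (show k - 2 ≤ #(univ : Finset (Fin n)) by
    rw [card_univ, Fintype.card_fin]; omega)
  obtain ⟨a, ha, b, hb, hT0, hab⟩ := C.exists_linearIndependent_pair_eq_zero_on T (by omega)
  have hsum : a + b ≠ 0 := fun h => by
    simpa using LinearIndependent.pair_iff.mp hab 1 1 (by simpa using h)
  have hwt := ZMod.hammingNorm_add_add_hammingNorm_add_hammingNorm_le Tᶜ (u := a) (v := b)
    (fun i hi => (hT0 i (by simpa using hi)).1) (fun i hi => (hT0 i (by simpa using hi)).2)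
  rw [card_compl, hT, Fintype.card_fin] at hwt
  have hwt_sum := hmds _ (C.add_mem ha hb) hsum
  have hwt_a := hmds a ha (hab.ne_zero 0)
  have hwt_b := hmds b hb (hab.ne_zero 1)
  omega
end

section
/- (The extended Golay code is self-dual) Let p = (1,0,1,0,0,0,1,1,1,0,1) ∈ (ZMod 2)^11, and let Q be the 12 × 12 matrix over GF(2) whose row i, for 0 ≤ i ≤ 10, is (ρ^i(p), 1), where ρ^i(p) is the cyclic rotation of p to the right by i positions, and whose row 11 is (1,1,1,1,1,1,1,1,1,1,1,0). Let H₁ = (Q | I₁₂) be the 12 × 24 matrix obtained by adjoining the 12 × 12 identity. Let G₂₄ = {x : Fin 24 → ZMod 2 | H₁ · x = 0}. Then G₂₄ equals its dual code: G₂₄ = {y : Fin 24 → ZMod 2 | ∀ x ∈ G₂₄, Σᵢ xᵢ·yᵢ = 0}. -/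
/-- The vector `p = (1,0,1,0,0,0,1,1,1,0,1)`. -/
def golayP : Fin 11 → ZMod 2 := ![1, 0, 1, 0, 0, 0, 1, 1, 1, 0, 1]

/-- Cyclic rotation to the right: `ρ(v) = (v₁₀, v₀, v₁, …, v₉)`. -/
def rotR (v : Fin 11 → ZMod 2) : Fin 11 → ZMod 2 := fun j => v (j - 1)

/-- The 12 × 12 matrix `Q`: for `0 ≤ i ≤ 10`, row `i` is `(ρ^i(p), 1)`, and
row 11 is `(1,1,1,1,1,1,1,1,1,1,1,0)`. -/
def golayQ : Matrix (Fin 12) (Fin 12) (ZMod 2) := fun i j =>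
  if _hi : (i : ℕ) < 11 then
    if hj : (j : ℕ) < 11 then (rotR^[(i : ℕ)] golayP) ⟨(j : ℕ), hj⟩ else 1
  else
    if (j : ℕ) < 11 then 1 else 0

/-- The 12 × 24 matrix `H₁ = (Q | I₁₂)`. -/
def golayH : Matrix (Fin 12) (Fin 24) (ZMod 2) := fun i j =>
  if hj : (j : ℕ) < 12 then golayQ i ⟨(j : ℕ), hj⟩
  else if (j : ℕ) - 12 = (i : ℕ) then 1 else 0

/-!
A parity-check matrix `(Q | I)` has kernel `{(a, -Q a)}`, and
`(a, -Q a) ⬝ᵥ y = a ⬝ᵥ (y₁ - Qᵀ y₂)`. So if `Qᵀ Q = -1` the code is orthogonal to itself,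
and a vector orthogonal to it has `y₁ = Qᵀ y₂`, whence `Q y₁ + y₂ = (Q Qᵀ + 1) y₂ = 0`
(a one-sided inverse of a square matrix is two-sided). Over GF(2), `Qᵀ Q = 1` for the Golay
matrix is a finite computation.
-/

open Matrix

def dualCode {ι R : Type*} [Fintype ι] [Mul R] [AddCommMonoid R] (C : Set (ι → R)) :
    Set (ι → R) :=
  {y | ∀ x ∈ C, x ⬝ᵥ y = 0}

lemma dualCode_preimage_comp_equiv {ι κ R : Type*} [Fintype ι] [Fintype κ]
    [NonUnitalNonAssocSemiring R]
    (e : ι ≃ κ) (C : Set (ι → R)) :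
    dualCode ((· ∘ e) ⁻¹' C) = (· ∘ e) ⁻¹' dualCode C := by
  ext y
  refine ⟨fun hy z hz => ?_, fun hy x hx => ?_⟩
  · rw [← comp_equiv_symm_dotProduct]
    exact hy _ (by simpa [Set.mem_preimage, Function.comp_assoc] using hz)
  · rw [← comp_equiv_dotProduct_comp_equiv (x := x) (y := y) e]
    exact hy _ hx

section SystematicCode

variable {n R : Type*} [Fintype n] [CommRing R]

lemma ker_fromCols_one [DecidableEq n] (Q : Matrix n n R) :
    {x | fromCols Q (1 : Matrix n n R) *ᵥ x = 0} =
      Set.range fun a => Sum.elim a (-(Q *ᵥ a)) := by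
  ext x
  simp only [Set.mem_ofPred_eq, Set.mem_range, fromCols_mulVec, one_mulVec]
  constructor
  · intro hx
    refine ⟨x ∘ Sum.inl, ?_⟩
    rw [← eq_neg_of_add_eq_zero_right hx, Sum.elim_comp_inl_inr]
  · rintro ⟨a, rfl⟩
    simp

lemma sumElim_neg_mulVec_dotProduct (Q : Matrix n n R) (a : n → R) (y : n ⊕ n → R) :
    Sum.elim a (-(Q *ᵥ a)) ⬝ᵥ y = a ⬝ᵥ (y ∘ Sum.inl - Qᵀ *ᵥ (y ∘ Sum.inr)) := by
  rw [← Sum.elim_comp_inl_inr y, sumElim_dotProduct_sumElim, neg_dotProduct, dotProduct_sub,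
    dotProduct_mulVec, vecMul_transpose, Sum.elim_comp_inl, Sum.elim_comp_inr, sub_eq_add_neg]

theorem dualCode_ker_fromCols_one [DecidableEq n] {Q : Matrix n n R} (hQ : Qᵀ * Q = -1) :
    dualCode {x | fromCols Q (1 : Matrix n n R) *ᵥ x = 0} =
      {x | fromCols Q (1 : Matrix n n R) *ᵥ x = 0} := by
  rw [ker_fromCols_one]
  ext y
  simp only [dualCode, Set.forall_mem_range, sumElim_neg_mulVec_dotProduct]
  constructor
  · intro hy
    have hy' : y ∘ Sum.inl = Qᵀ *ᵥ (y ∘ Sum.inr) :=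
      sub_eq_zero.mp <| dotProduct_eq_zero _ fun a => (dotProduct_comm _ _).trans (hy a)
    have hQ' : Q * Qᵀ = -1 := by
      rw [← neg_eq_iff_eq_neg, ← mul_neg]
      exact mul_eq_one_comm.mp (by rw [neg_mul, hQ, neg_neg])
    refine ⟨y ∘ Sum.inl, ?_⟩
    dsimp only
    rw [hy', mulVec_mulVec, hQ', neg_mulVec, one_mulVec, neg_neg, ← hy', Sum.elim_comp_inl_inr]
  · rintro ⟨b, rfl⟩ a
    rw [Sum.elim_comp_inl, Sum.elim_comp_inr, mulVec_neg, mulVec_mulVec, hQ, neg_mulVec,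
      one_mulVec, neg_neg, sub_self, dotProduct_zero]

end SystematicCode

lemma golayH_submatrix_finSumFinEquiv :
    golayH.submatrix id (finSumFinEquiv (m := 12) (n := 12)) = fromCols golayQ 1 := by
  ext i (j | j)
  · have hj : (finSumFinEquiv (.inl j : Fin 12 ⊕ Fin 12) : ℕ) = j := rfl
    simp [golayH, hj]
  · have hj : (finSumFinEquiv (.inr j : Fin 12 ⊕ Fin 12) : ℕ) = 12 + j := rfl
    simp [golayH, hj, one_apply, Fin.ext_iff, eq_comm]

lemma ker_golayH :
    {x | golayH *ᵥ x = 0} =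
      (· ∘ finSumFinEquiv) ⁻¹'
        {x | fromCols golayQ (1 : Matrix (Fin 12) (Fin 12) _) *ᵥ x = 0} := by
  ext x
  simp [← golayH_submatrix_finSumFinEquiv, submatrix_mulVec_equiv, Function.comp_assoc]

lemma golayQ_transpose_mul_self : golayQᵀ * golayQ = -1 := by
  decide

/-- The extended Golay code `G₂₄ = {x | H₁ · x = 0}` is self-dual: it equals its dual code. -/
theorem stmt_11 :
    {x : Fin 24 → ZMod 2 | golayH.mulVec x = 0} =
      {y : Fin 24 → ZMod 2 |
        ∀ x : Fin 24 → ZMod 2, golayH.mulVec x = 0 → ∑ i : Fin 24, x i * y i = 0} := by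
  change _ = dualCode {x | golayH *ᵥ x = 0}
  rw [ker_golayH, dualCode_preimage_comp_equiv,
    dualCode_ker_fromCols_one golayQ_transpose_mul_self]
end

section
/- (Key equation for decoding Reed–Solomon codes) Let F be a field, n and k natural numbers with k ≤ n, α an invertible element of F, E a finite subset of Fin n (the set of error locations), and e : Fin n → F (the error values). Define the error locator polynomial σ(x) = Π_{i∈E}(x − α^{−i}), the error evaluator polynomial ω(x) = Σ_{i∈E} e_i · Π_{l∈E, l≠i}(x − α^{−l}), the syndromes S_j = Σ_{i∈E} e_i·α^{i·j} for 1 ≤ j ≤ n−k, and the syndrome polynomial S(x) = Σ_{j=0}^{n−k−1} S_{j+1}·x^j. Then there exists a polynomial μ(x) ∈ F[x] such that σ(x)·S(x) = −ω(x) + μ(x)·x^{n−k}; equivalently, x^{n−k} divides σ(x)·S(x) + ω(x). -/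
/-!
Expanding the syndromes over the error locations, the syndrome polynomial becomes
`S = ∑ i, e i · ∑_{j<m} a_i^(j+1) x^j` with `a_i = α^i` and `m = n - k`. Each inner sum is a
truncated geometric series, so `(x - a_i⁻¹) · ∑_{j<m} a_i^(j+1) x^j = a_i^m x^m - 1`. Multiplying
`S` by `σ` therefore cancels the factor `x - a_i⁻¹` of `σ` against the `i`-th summand, leaving
`-ω` plus a multiple of `x^m`.
-/

open Polynomial Finset

section KeyEquation

variable {R : Type*} [CommRing R]

theorem X_sub_C_mul_sum_C_pow_succ_mul_X_pow {a b : R} (hba : b * a = 1) (m : ℕ) :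
    (X - C b) * ∑ j ∈ range m, C (a ^ (j + 1)) * X ^ j = C (a ^ m) * X ^ m - 1 := by
  have hsum : ∑ j ∈ range m, C (a ^ (j + 1)) * X ^ j = C a * ∑ j ∈ range m, (C a * X) ^ j := by
    simp only [mul_sum, mul_pow, ← C_pow, ← mul_assoc, ← C_mul, pow_succ']
  have hfactor : (X - C b) * C a = C a * X - 1 := by
    rw [sub_mul, ← C_mul, hba, C_1, mul_comm]
  rw [hsum, ← mul_assoc, hfactor, mul_geom_sum, mul_pow, C_pow]

theorem sum_C_sum_mul_pow_succ_mul_X_pow {ι : Type*} (E : Finset ι) (e a : ι → R) (m : ℕ) :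
    ∑ j ∈ range m, C (∑ i ∈ E, e i * a i ^ (j + 1)) * X ^ j
      = ∑ i ∈ E, C (e i) * ∑ j ∈ range m, C (a i ^ (j + 1)) * X ^ j := by
  simp only [map_sum, sum_mul, mul_sum, C_mul, mul_assoc]
  exact sum_comm

theorem prod_X_sub_C_mul_sum_geom_eq {ι : Type*} [DecidableEq ι] (E : Finset ι) (e a b : ι → R)
    (hba : ∀ i ∈ E, b i * a i = 1) (m : ℕ) :
    (∏ i ∈ E, (X - C (b i))) * ∑ i ∈ E, C (e i) * ∑ j ∈ range m, C (a i ^ (j + 1)) * X ^ j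
      = -∑ i ∈ E, C (e i) * ∏ l ∈ E.erase i, (X - C (b l))
        + (∑ i ∈ E, C (e i * a i ^ m) * ∏ l ∈ E.erase i, (X - C (b l))) * X ^ m := by
  rw [mul_sum, sum_mul, ← sum_neg_distrib, ← sum_add_distrib]
  refine sum_congr rfl fun i hi => ?_
  rw [← mul_prod_erase E _ hi, C_mul]
  linear_combination (C (e i) * ∏ l ∈ E.erase i, (X - C (b l))) *
    X_sub_C_mul_sum_C_pow_succ_mul_X_pow (hba i hi) m

end KeyEquation

theorem stmt_15_general {F : Type*} [Field F] (n k : ℕ)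
    (α : F) (hα : IsUnit α) (E : Finset (Fin n)) (e : Fin n → F)
    (σ ω S : Polynomial F)
    (hσ : σ = ∏ i ∈ E, (X - C ((α ^ (i : ℕ))⁻¹)))
    (hω : ω = ∑ i ∈ E, C (e i) * ∏ l ∈ E.erase i, (X - C ((α ^ (l : ℕ))⁻¹)))
    (hS : S = ∑ j ∈ Finset.range (n - k),
      C (∑ i ∈ E, e i * α ^ ((i : ℕ) * (j + 1))) * X ^ j) :
    ∃ μ : Polynomial F, σ * S = -ω + μ * X ^ (n - k) := by
  simp only [pow_mul] at hS
  rw [sum_C_sum_mul_pow_succ_mul_X_pow] at hS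
  subst hσ hω hS
  exact ⟨_, prod_X_sub_C_mul_sum_geom_eq E e (fun i => α ^ (i : ℕ)) (fun i => (α ^ (i : ℕ))⁻¹)
    (fun i _ => inv_mul_cancel₀ (hα.pow _).ne_zero) _⟩

/-- The key equation for decoding Reed–Solomon codes: the error locator polynomial `σ`,
the error evaluator polynomial `ω` and the syndrome polynomial `S` satisfy
`σ(x)·S(x) = -ω(x) + μ(x)·x^(n-k)` for some polynomial `μ`. -/
theorem stmt_15 {F : Type*} [Field F] (n k : ℕ) (hkn : k ≤ n)
    (α : F) (hα : IsUnit α) (E : Finset (Fin n)) (e : Fin n → F)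
    (σ ω S : Polynomial F)
    (hσ : σ = ∏ i ∈ E, (X - C ((α ^ (i : ℕ))⁻¹)))
    (hω : ω = ∑ i ∈ E, C (e i) * ∏ l ∈ E.erase i, (X - C ((α ^ (l : ℕ))⁻¹)))
    (hS : S = ∑ j ∈ Finset.range (n - k),
      C (∑ i ∈ E, e i * α ^ ((i : ℕ) * (j + 1))) * X ^ j) :
    ∃ μ : Polynomial F, σ * S = -ω + μ * X ^ (n - k) :=
  stmt_15_general n k α hα E e σ ω S hσ hω hS
end

section
/- Let F be a field, n ≥ 1, α an invertible element of F whose multiplicative order is at least n, E a finite subset of Fin n, and e : Fin n → F with e_i ≠ 0 for all i ∈ E. Define σ(x) = Π_{i∈E}(x − α^{−i}) and ω(x) = Σ_{i∈E} e_i · Π_{l∈E, l≠i}(x − α^{−l}). Then: (1) σ(x) and ω(x) are coprime in F[x]; and (2) for every j ∈ E, the formal derivative σ′ satisfies σ′(α^{−j}) ≠ 0 and e_j = ω(α^{−j}) / σ′(α^{−j}), i.e., e_j · σ′(α^{−j}) = ω(α^{−j}). -/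
/-!
The points `α⁻ⁱ`, `i ∈ E`, are distinct, so `σ` is the nodal polynomial of simple nodes and
`σ'(α⁻ʲ) = ∏_{l ≠ j} (α⁻ʲ - α⁻ˡ) ≠ 0`. At a node `α⁻ʲ` every term of `ω` but the `j`-th vanishes,
and that one is `e_j σ'(α⁻ʲ) ≠ 0`; so `ω` has no root in common with the split polynomial `σ`.
-/

open Polynomial Lagrange

theorem IsUnit.injective_pow_fin {M : Type*} [Monoid M] {x : M} (hx : IsUnit x) {n : ℕ}
    (hord : ∀ m : ℕ, 0 < m → m < n → x ^ m ≠ 1) :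
    Function.Injective fun i : Fin n => x ^ (i : ℕ) := by
  intro i j hij
  wlog hle : (i : ℕ) ≤ j generalizing i j
  · exact (this hij.symm (le_of_not_ge hle)).symm
  obtain ⟨k, hk⟩ := Nat.exists_eq_add_of_le hle
  have hk1 : x ^ k = 1 :=
    (hx.pow i).mul_left_cancel (by simpa [hk, pow_add] using hij.symm)
  have hk0 : k = 0 := by
    by_contra hk0
    exact hord k (by omega) (by omega) hk1
  exact Fin.ext (by omega)

section Nodal

variable {F ι : Type*} [Field F] {s : Finset ι} {v : ι → F}

theorem isCoprime_nodal_of_eval_ne_zero {p : F[X]} (hp : ∀ i ∈ s, p.eval (v i) ≠ 0) :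
    IsCoprime (nodal s v) p := by
  refine IsCoprime.prod_left fun i hi => ?_
  rw [(irreducible_X_sub_C (v i)).coprime_iff_not_dvd, dvd_iff_isRoot]
  exact hp i hi

variable [DecidableEq ι]

theorem eval_derivative_nodal_at_node_ne_zero (hvs : Set.InjOn v s) {i : ι} (hi : i ∈ s) :
    (derivative (nodal s v)).eval (v i) ≠ 0 := fun h =>
  nodalWeight_ne_zero hvs hi (by rw [nodalWeight_eq_eval_derivative_nodal hi, h, inv_zero])

theorem eval_sum_C_mul_nodal_erase_at_node (e : ι → F) {j : ι} (hj : j ∈ s) :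
    (∑ i ∈ s, C (e i) * nodal (s.erase i) v).eval (v j) =
      e j * (derivative (nodal s v)).eval (v j) := by
  rw [eval_nodal_derivative_eval_node_eq hj, eval_finsetSum, Finset.sum_eq_single_of_mem j hj,
    eval_mul, eval_C]
  intro i _ hij
  rw [eval_mul, eval_nodal_at_node (Finset.mem_erase.mpr ⟨Ne.symm hij, hj⟩), mul_zero]

end Nodal

theorem stmt_16_general {F : Type*} [Field F] {n : ℕ}
    (α : F) (hα : IsUnit α) (hord : ∀ m : ℕ, 0 < m → m < n → α ^ m ≠ 1)
    (E : Finset (Fin n)) (e : Fin n → F) (he : ∀ i ∈ E, e i ≠ 0)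
    (σ ω : Polynomial F)
    (hσ : σ = ∏ i ∈ E, (X - C ((α ^ (i : ℕ))⁻¹)))
    (hω : ω = ∑ i ∈ E, C (e i) * ∏ l ∈ E.erase i, (X - C ((α ^ (l : ℕ))⁻¹))) :
    IsCoprime σ ω ∧
      ∀ j ∈ E, (derivative σ).eval ((α ^ (j : ℕ))⁻¹) ≠ 0 ∧
        e j * (derivative σ).eval ((α ^ (j : ℕ))⁻¹) = ω.eval ((α ^ (j : ℕ))⁻¹) := by
  set v : Fin n → F := fun i => (α ^ (i : ℕ))⁻¹
  have hinj : Set.InjOn v E := (inv_injective.comp (hα.injective_pow_fin hord)).injOn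
  replace hσ : σ = nodal E v := hσ
  replace hω : ω = ∑ i ∈ E, C (e i) * nodal (E.erase i) v := hω
  have hσ' : ∀ j ∈ E, (derivative σ).eval (v j) ≠ 0 := fun j hj =>
    hσ ▸ eval_derivative_nodal_at_node_ne_zero hinj hj
  have hω_node : ∀ j ∈ E, ω.eval (v j) = e j * (derivative σ).eval (v j) := fun j hj => by
    rw [hω, hσ, eval_sum_C_mul_nodal_erase_at_node e hj]
  refine ⟨hσ ▸ isCoprime_nodal_of_eval_ne_zero fun j hj => ?_,
    fun j hj => ⟨hσ' j hj, (hω_node j hj).symm⟩⟩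
  rw [hω_node j hj]
  exact mul_ne_zero (he j hj) (hσ' j hj)

/-- For an error pattern with nonzero error values at locations `E ⊆ Fin n`, where the
invertible element `α` has multiplicative order at least `n`: the error locator `σ` and
error evaluator `ω` are coprime, and the error values are recovered by
`e_j = ω(α^{-j}) / σ'(α^{-j})`. -/
theorem stmt_16 {F : Type*} [Field F] {n : ℕ} (hn : 1 ≤ n)
    (α : F) (hα : IsUnit α) (hord : ∀ m : ℕ, 0 < m → m < n → α ^ m ≠ 1)
    (E : Finset (Fin n)) (e : Fin n → F) (he : ∀ i ∈ E, e i ≠ 0)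
    (σ ω : Polynomial F)
    (hσ : σ = ∏ i ∈ E, (X - C ((α ^ (i : ℕ))⁻¹)))
    (hω : ω = ∑ i ∈ E, C (e i) * ∏ l ∈ E.erase i, (X - C ((α ^ (l : ℕ))⁻¹))) :
    IsCoprime σ ω ∧
      ∀ j ∈ E, (derivative σ).eval ((α ^ (j : ℕ))⁻¹) ≠ 0 ∧
        e j * (derivative σ).eval ((α ^ (j : ℕ))⁻¹) = ω.eval ((α ^ (j : ℕ))⁻¹) :=
  stmt_16_general α hα hord E e he σ ω hσ hω
end

section
/- (Singularity of the syndrome matrix beyond the number of errors) Let F be a field, α ∈ F, E a finite set of natural numbers with |E| = s, and e : ℕ → F. Define the syndromes S_j = Σ_{l∈E} e_l·α^{j·l} for j ≥ 1. Then for every r with r > s, the r × r Hankel matrix M given by M(i,j) = S_{i+j+2} for 0 ≤ i, j ≤ r−1 (i.e., the matrix with rows (S₂, S₃, …, S_{r+1}), (S₃, S₄, …, S_{r+2}), …, (S_{r+1}, …, S_{2r})) has determinant 0. -/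
/-! The syndrome matrix factors as `A * B` through the `s`-element index set `E`, with
`A i l = e_l α^((i+1) l)` and `B l j = α^((j+1) l)`; a product of an `r × s` and an `s × r`
matrix has rank at most `s < r`, so it is not invertible. -/

theorem Matrix.det_mul_eq_zero_of_card_lt {K m n : Type*} [Field K] [Fintype m] [Fintype n]
    [DecidableEq n] (A : Matrix n m K) (B : Matrix m n K)
    (h : Fintype.card m < Fintype.card n) : (A * B).det = 0 := by
  by_contra hdet
  have hrank : (A * B).rank = Fintype.card n :=
    (A * B).rank_of_isUnit ((A * B).isUnit_iff_isUnit_det.2 (isUnit_iff_ne_zero.2 hdet))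
  have hle := (A.rank_mul_le_left B).trans A.rank_le_card_width
  omega

theorem hankel_sum_mul_pow_eq_mul {R : Type*} [CommSemiring R] (α : R) (E : Finset ℕ)
    (e : ℕ → R) (r : ℕ) :
    (Matrix.of fun i j : Fin r => ∑ l ∈ E, e l * α ^ (((i : ℕ) + (j : ℕ) + 2) * l)) =
      (Matrix.of fun (i : Fin r) (l : E) => e l * α ^ (((i : ℕ) + 1) * l)) *
        Matrix.of fun (l : E) (j : Fin r) => α ^ (((j : ℕ) + 1) * l) := by
  ext i j
  simp only [Matrix.of_apply, Matrix.mul_apply, Finset.sum_coe_sort E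
    (fun l => e l * α ^ (((i : ℕ) + 1) * l) * α ^ (((j : ℕ) + 1) * l))]
  refine Finset.sum_congr rfl fun l _ => ?_
  ring

/-- Singularity of the syndrome matrix beyond the number of errors: with syndromes
`S_j = Σ_{l ∈ E} e_l · α^(j·l)` coming from `s = |E|` error locations, the `r × r`
Hankel matrix `(S_{i+j+2})_{0 ≤ i,j ≤ r-1}` is singular for every `r > s`. -/
theorem stmt_17 {F : Type*} [Field F] (α : F) (E : Finset ℕ) (s : ℕ) (hE : E.card = s)
    (e : ℕ → F) (r : ℕ) (hr : s < r) :
    Matrix.det (Matrix.of fun i j : Fin r =>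
      ∑ l ∈ E, e l * α ^ (((i : ℕ) + (j : ℕ) + 2) * l)) = 0 := by
  rw [hankel_sum_mul_pow_eq_mul]
  exact Matrix.det_mul_eq_zero_of_card_lt _ _ (by simpa [hE] using hr)
end

section
/- (Reiger bound) Let F be a finite field, n ≥ 1, and let C be a linear code of length n over F with dim C = k. Call a vector v : Fin n → F a burst of length at most l if there is a starting position a such that the support of v is contained in the l cyclically consecutive positions {a, a+1, …, a+l−1} (indices mod n). Suppose 2l ≤ n and C can correct all bursts of length up to l, i.e., for any two distinct bursts u ≠ v of length at most l, u − v ∉ C. Then 2l ≤ n − k. -/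
/-!
A codeword supported on the first `2l` coordinates is the difference of two bursts of length
`l` (its first half and minus its second half), so by burst correction it is zero. Hence the
projection of `C` onto the last `n - 2l` coordinates is injective, and `k ≤ n - 2l`.
-/

/-- `v` is a burst of length at most `l`: the support of `v` is contained in `l`
cyclically consecutive positions starting at some position `a`. -/
def IsBurst {F : Type*} [Zero F] {n : ℕ} (l : ℕ) (v : Fin n → F) : Prop :=
  ∃ a : ℕ, ∀ i : Fin n, v i ≠ 0 → ∃ b : ℕ, b < l ∧ (i : ℕ) = (a + b) % n

theorem isBurst_of_support_subset_Ico {F : Type*} [Zero F] {n l : ℕ} (a : ℕ) (v : Fin n → F)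
    (hv : ∀ i : Fin n, v i ≠ 0 → a ≤ i ∧ (i : ℕ) < a + l) : IsBurst l v :=
  ⟨a, fun i hi => ⟨i - a, by grind, by grind [Nat.mod_eq_of_lt]⟩⟩

theorem exists_isBurst_sub_eq {F : Type*} [AddGroup F] {n l : ℕ} (w : Fin n → F)
    (hw : ∀ i : Fin n, 2 * l ≤ i → w i = 0) :
    ∃ u v : Fin n → F, IsBurst l u ∧ IsBurst l v ∧ u - v = w := by
  classical
  refine ⟨fun i => if (i : ℕ) < l then w i else 0, fun i => if (i : ℕ) < l then 0 else -w i,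
    isBurst_of_support_subset_Ico 0 _ fun i hi => ?_,
    isBurst_of_support_subset_Ico l _ fun i hi => ?_, ?_⟩
  · have : (i : ℕ) < l := by by_contra h; simp [h] at hi
    omega
  · have : ¬ (i : ℕ) < l := fun h' => by simp [h'] at hi
    by_contra h
    simp [this, hw i (by omega)] at hi
  · funext i
    by_cases h : (i : ℕ) < l <;> simp [h]

theorem eq_zero_of_forall_ge_eq_zero {F : Type*} [AddGroup F] {n l : ℕ} {C : Set (Fin n → F)}
    (hburst : ∀ u v : Fin n → F, IsBurst l u → IsBurst l v → u ≠ v → u - v ∉ C)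
    {c : Fin n → F} (hc : c ∈ C) (hsupp : ∀ i : Fin n, 2 * l ≤ i → c i = 0) : c = 0 := by
  obtain ⟨u, v, hu, hv, rfl⟩ := exists_isBurst_sub_eq c hsupp
  by_contra hne
  exact hburst u v hu hv (fun h => hne (by rw [h, sub_self])) hc

theorem Submodule.finrank_le_sub_of_forall_ge_eq_zero {F : Type*} [Field F] {n m : ℕ}
    (hm : m ≤ n) (C : Submodule F (Fin n → F))
    (hC : ∀ c ∈ C, (∀ i : Fin n, m ≤ i → c i = 0) → c = 0) :
    Module.finrank F C ≤ n - m := by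
  let tail : Fin (n - m) → Fin n := fun j => ⟨m + j, by omega⟩
  have hinj : Function.Injective ((LinearMap.funLeft F F tail).comp C.subtype) := by
    rw [← LinearMap.ker_eq_bot, LinearMap.ker_eq_bot']
    intro c hc
    refine Subtype.ext (hC c c.2 fun i hi => ?_)
    simpa [tail, Nat.add_sub_cancel' hi] using congrFun hc ⟨i - m, by omega⟩
  simpa using LinearMap.finrank_le_finrank_of_injective hinj

theorem stmt_18_general {F : Type*} [Field F] {n l k : ℕ}
    (C : Submodule F (Fin n → F)) (hk : Module.finrank F C = k)
    (hl : 2 * l ≤ n)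
    (hburst : ∀ u v : Fin n → F, IsBurst l u → IsBurst l v → u ≠ v → u - v ∉ C) :
    2 * l ≤ n - k := by
  have := C.finrank_le_sub_of_forall_ge_eq_zero hl fun c hc =>
    eq_zero_of_forall_ge_eq_zero (C := C) hburst hc
  omega

/-- Reiger bound: if a linear `[n,k]` code over a finite field corrects all bursts of
length up to `l` (with `2l ≤ n`), i.e. the difference of two distinct bursts of length at
most `l` is never a codeword, then `2l ≤ n - k`. -/
theorem stmt_18 {F : Type*} [Field F] [Fintype F] {n l k : ℕ} (hn : 1 ≤ n)
    (C : Submodule F (Fin n → F)) (hk : Module.finrank F C = k)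
    (hl : 2 * l ≤ n)
    (hburst : ∀ u v : Fin n → F, IsBurst l u → IsBurst l v → u ≠ v → u - v ∉ C) :
    2 * l ≤ n - k :=
  stmt_18_general C hk hl hburst
end
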